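/- After an attack, the attacked closed-loop system exhibits the complete behavior of the plant: for every string sσa ∈ L(Sa/Ga) with s ∈ Σ* and σ ∈ Σ_{c,v}, the set of continuations over Σ equals the post-language of the plant after sσ, i.e., {t ∈ Σ* : sσa·t ∈ L(Sa/Ga)} = {t ∈ Σ* : sσt ∈ L(G)}. -/

import Mathlib

/-!
Common formalization of supervisory control of DES under actuator-enablement
attacks, following the natural-language context.

* A plant is a DFA with partial transition function `f : X → E → Option X`
  and initial state `x0`; `runFrom` extends `f` to strings; `Lang f x0` is the
  generated language.
* A strict subautomaton of an automaton is represented by its state set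
  `Q : Set X`, with induced transition function `subStep f Q`.
* Attacked events are modelled by the alphabet `E ⊕ E`: `Sum.inl e` is the
  ordinary event `e`, `Sum.inr e` is the attacked copy `eᵃ` (meaningful for
  `e ∈ Scv`).
* The attacked plant `gaStep`, attacked supervisor `saStep` (state `none`
  playing the role of the fresh state `A`), and their synchronous composition
  `grStep` (the attacked closed-loop system `G^R = Sa ∥ Ga`) are defined below,
  together with detection states, robust-recovery, the resilient specification
  `Ha`, supervisors for `G^R`, and resilience.
-/

open Classical List

namespace RobustRec

variable {X : Type*} {E : Type*}

/-- Extension of a partial transition function to strings. -/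
def runFrom (f : X → E → Option X) : X → List E → Option X
  | x, [] => some x
  | x, e :: w => (f x e).bind fun y => runFrom f y w

/-- Language generated from state `x0`. -/
def Lang (f : X → E → Option X) (x0 : X) : Set (List E) :=
  {w | (runFrom f x0 w).isSome}

/-- Transition function of the strict (induced) subautomaton with state set `Q`:
a transition is defined iff it is defined in the big automaton and both its
endpoints lie in `Q`. -/
noncomputable def subStep (f : X → E → Option X) (Q : Set X) : X → E → Option X :=
  fun x e => (f x e).bind fun y => if x ∈ Q ∧ y ∈ Q then some y else none

/-- Vulnerable states: those where some vulnerable controllable event is feasible. -/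
def vulnStates (f : X → E → Option X) (Scv : Set E) : Set X :=
  {x | ∃ e ∈ Scv, (f x e).isSome}

/-- A supervisor for the plant `(f, x0)`, represented by its state set `XS`
(the induced strict subautomaton): it contains `x0`, is controllable w.r.t.
the uncontrollable events `Suc`, and is safe w.r.t. the unsafe states `XUS`. -/
structure IsSupervisor (f : X → E → Option X) (x0 : X) (Suc : Set E)
    (XUS : Set X) (XS : Set X) : Prop where
  init_mem : x0 ∈ XS
  controllable : ∀ x ∈ XS, ∀ e ∈ Suc, ∀ y, f x e = some y → y ∈ XS
  safe : ∀ x ∈ XS, x ∉ XUS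

/-- The attacked plant `Ga`: all transitions of `G`, plus, for every transition
on a vulnerable event `σ ∈ Scv`, a parallel transition on its attacked copy. -/
noncomputable def gaStep (f : X → E → Option X) (Scv : Set E) :
    X → E ⊕ E → Option X
  | x, Sum.inl e => f x e
  | x, Sum.inr e => if e ∈ Scv then f x e else none

/-- The attacked supervisor `Sa`: states are `some x` for states `x` of `S`
plus the fresh state `A = none` with a self-loop on every event; for every
state `x` of `S` and `σ ∈ Scv` with `f_S(x,σ)` undefined there is a transition
on `σᵃ` from `x` to `A`. -/
noncomputable def saStep (f : X → E → Option X) (XS : Set X) (Scv : Set E) :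
    Option X → E ⊕ E → Option (Option X)
  | none, _ => some none
  | some x, Sum.inl e => (subStep f XS x e).map some
  | some x, Sum.inr e =>
      if e ∈ Scv ∧ x ∈ XS ∧ subStep f XS x e = none then some none else none

/-- Synchronous composition of two automata over a common alphabet. -/
def prodStep {X1 X2 A : Type*} (f1 : X1 → A → Option X1) (f2 : X2 → A → Option X2) :
    X1 × X2 → A → Option (X1 × X2) :=
  fun p a => (f1 p.1 a).bind fun y1 => (f2 p.2 a).map fun y2 => (y1, y2)

/-- The attacked closed-loop system `G^R = Sa ∥ Ga`. Its post-attack states are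
those of the form `(none, x)`, i.e. `(A, x)`. -/
noncomputable def grStep (f : X → E → Option X) (XS : Set X) (Scv : Set E) :
    Option X × X → E ⊕ E → Option (Option X × X) :=
  prodStep (saStep f XS Scv) (gaStep f Scv)

/-- Initial state of `G^R`. -/
def grInit (x0 : X) : Option X × X := (some x0, x0)

/-- Embedding of strings over `Σ` into strings over `Σ ∪ Σᵃ_{c,v}`. -/
def embed : List E → List (E ⊕ E) := List.map Sum.inl

/-- The language `L(Sa/Ga)` of the attacked closed-loop system. -/
noncomputable def GRLang (f : X → E → Option X) (x0 : X) (XS : Set X) (Scv : Set E) :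
    Set (List (E ⊕ E)) :=
  Lang (grStep f XS Scv) (grInit x0)

/-- The detection language `L_det = {sσ ∈ L(G) | s ∈ L(S/G), σ ∈ Σ_{c,v},
sσᵃ ∈ L(Sa/Ga)}`. -/
noncomputable def detLang (f : X → E → Option X) (x0 : X) (XS : Set X) (Scv : Set E) :
    Set (List E) :=
  {w | ∃ s σ, w = s ++ [σ] ∧ σ ∈ Scv ∧ w ∈ Lang f x0 ∧
        s ∈ Lang (subStep f XS) x0 ∧ embed s ++ [Sum.inr σ] ∈ GRLang f x0 XS Scv}

/-- The detection states `X_det = {f(x0, sσ) : sσ ∈ L_det}`. -/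
noncomputable def detStates (f : X → E → Option X) (x0 : X) (XS : Set X) (Scv : Set E) :
    Set X :=
  {x | ∃ w ∈ detLang f x0 XS Scv, runFrom f x0 w = some x}

/-- `r` is a robust-recovery strategy from `x` relative to the candidate set `R`
of recoverable states, the robust region `XR` and the bad states
`Bad = X_v ∪ X_US`: (1) `r` leads into `XR`; (2) no prefix of `r` visits `Bad`;
(3) no prefix of `r` can uncontrollably reach `Bad`; (4) any one-step
uncontrollable deviation from `r` lands in `R`. -/
def IsRecoveryPath (f : X → E → Option X) (Suc : Set E) (XR Bad : Set X)
    (R : Set X) (x : X) (r : List E) : Prop :=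
  (∃ y ∈ XR, runFrom f x r = some y) ∧
  (∀ t, t <+: r → ∀ y, runFrom f x t = some y → y ∉ Bad) ∧
  (∀ t, t <+: r → ∀ u : List E, (∀ e ∈ u, e ∈ Suc) →
      ∀ y, runFrom f x (t ++ u) = some y → y ∉ Bad) ∧
  (∀ t, t <+: r → ∀ e ∈ Suc, ∀ y, runFrom f x (t ++ [e]) = some y →
      ¬ (t ++ [e]) <+: r → y ∈ R)

/-- The set `R` of AE-robust recoverable states: the largest subset of
`X \ Bad` each of whose elements admits a robust-recovery strategy (relative
to the set itself). -/
def recSet (f : X → E → Option X) (Suc : Set E) (XR Bad : Set X) : Set X :=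
  ⋃₀ {R | R ⊆ Badᶜ ∧ ∀ x ∈ R, ∃ r, IsRecoveryPath f Suc XR Bad R x r}

/-- The attacked system `Sa/Ga` is AE-robust recoverable w.r.t. the robust
region `XR` if every detection state is AE-robust recoverable. -/
noncomputable def AERobustRecoverable (f : X → E → Option X) (x0 : X)
    (Suc Scv : Set E) (XUS XS XR : Set X) : Prop :=
  detStates f x0 XS Scv ⊆ recSet f Suc XR (vulnStates f Scv ∪ XUS)

/-- Reachable states of `G^R` (the state set of the synchronous composition). -/
noncomputable def grStates (f : X → E → Option X) (x0 : X) (XS : Set X) (Scv : Set E) :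
    Set (Option X × X) :=
  {p | ∃ w, runFrom (grStep f XS Scv) (grInit x0) w = some p}

/-- A supervisor for `G^R`, represented by its state set `Q` (inducing a strict
subautomaton of `G^R`): it contains the initial state and is controllable
w.r.t. `Suc` (attacked events being controllable). -/
structure IsGRSupervisor (f : X → E → Option X) (x0 : X) (Suc Scv : Set E)
    (XS : Set X) (Q : Set (Option X × X)) : Prop where
  subset : Q ⊆ grStates f x0 XS Scv
  init_mem : grInit x0 ∈ Q
  controllable : ∀ p ∈ Q, ∀ e ∈ Suc, ∀ q, grStep f XS Scv p (Sum.inl e) = some q → q ∈ Q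

/-- State set of the resilient specification `Ha`: `G^R` minus every post-attack
state `(A, x)` with `x ∈ X_v ∪ X_US`. -/
def haCarrier (f : X → E → Option X) (Scv : Set E) (XUS : Set X) :
    Set (Option X × X) :=
  {p | ¬ (p.1 = none ∧ p.2 ∈ vulnStates f Scv ∪ XUS)}

/-- Marked states of `Ha`: post-attack states `(A, x)` with `x` in the robust
region. -/
def haMarked (XR : Set X) : Set (Option X × X) :=
  {p | p.1 = (none : Option X) ∧ p.2 ∈ XR}

/-- The closed-loop language `L(S^R/G^R) = L(S^R)` of a supervisor `Q` for `G^R`. -/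
noncomputable def SRLang (f : X → E → Option X) (x0 : X) (XS : Set X) (Scv : Set E)
    (Q : Set (Option X × X)) : Set (List (E ⊕ E)) :=
  Lang (subStep (grStep f XS Scv) Q) (grInit x0)

/-- `S^R` is safe w.r.t. the resilient specification `Ha`: `L(S^R) ⊆ L(Ha)`. -/
noncomputable def SafeWrtHa (f : X → E → Option X) (x0 : X) (XS : Set X)
    (Scv : Set E) (XUS : Set X) (Q : Set (Option X × X)) : Prop :=
  SRLang f x0 XS Scv Q ⊆
    Lang (subStep (grStep f XS Scv) (haCarrier f Scv XUS)) (grInit x0)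

/-- `S^R` is nonblocking: from every post-attack state of `S^R`, a marked state
of `Ha` is reachable within `S^R`. -/
noncomputable def NonblockingSR (f : X → E → Option X) (XS : Set X) (Scv : Set E)
    (XR : Set X) (Q : Set (Option X × X)) : Prop :=
  ∀ p ∈ Q, p.1 = (none : Option X) →
    ∃ w q, runFrom (subStep (grStep f XS Scv) Q) p w = some q ∧ q ∈ haMarked XR

/-- `S^R` is maximally permissive among safe nonblocking supervisors for `G^R`. -/
noncomputable def MaxPermissive (f : X → E → Option X) (x0 : X) (Suc Scv : Set E)
    (XS XUS XR : Set X) (Q : Set (Option X × X)) : Prop :=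
  ∀ Q', IsGRSupervisor f x0 Suc Scv XS Q' → SafeWrtHa f x0 XS Scv XUS Q' →
    NonblockingSR f XS Scv XR Q' → SRLang f x0 XS Scv Q' ⊆ SRLang f x0 XS Scv Q

/-- `S^R` (given by its state set `Q`) is resilient w.r.t. `Scv` and the robust
region `XR`: it permits the full nominal behavior `L(S/G)`, and after any
AE-attack `sσᵃ` feasible in `L(Sa/Ga)` it permits the attack, keeps all its
subsequent behavior out of `Bad = X_v ∪ X_US`, and can always be extended
within `L(S^R)` to reach a post-attack state `(A, x)` with `x ∈ XR`; i.e. it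
enforces a robust-recovery strategy from the detection state. -/
noncomputable def ResilientSup (f : X → E → Option X) (x0 : X) (Scv : Set E)
    (XS XR Bad : Set X) (Q : Set (Option X × X)) : Prop :=
  (∀ s ∈ Lang (subStep f XS) x0, embed s ∈ SRLang f x0 XS Scv Q) ∧
  ∀ s : List E, embed s ∈ SRLang f x0 XS Scv Q →
    ∀ σ ∈ Scv, embed s ++ [Sum.inr σ] ∈ GRLang f x0 XS Scv →
      embed s ++ [Sum.inr σ] ∈ SRLang f x0 XS Scv Q ∧
      ∀ t : List E, embed s ++ [Sum.inr σ] ++ embed t ∈ SRLang f x0 XS Scv Q →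
        (∀ t', t' <+: t → ∀ y, runFrom f x0 (s ++ σ :: t') = some y →
            y ∉ Bad) ∧
        ∃ u q, runFrom (subStep (grStep f XS Scv) Q) (grInit x0)
                 (embed s ++ [Sum.inr σ] ++ embed t ++ u) = some q ∧
               q.1 = (none : Option X) ∧ q.2 ∈ XR

/-- A prefix-closed language. -/
def PrefixClosed (K : Set (List E)) : Prop := ∀ s t : List E, s ++ t ∈ K → s ∈ K

/-- `K` is controllable w.r.t. the language `M` and uncontrollable events `Suc`. -/
def ControllableLang (K M : Set (List E)) (Suc : Set E) : Prop :=
  ∀ s ∈ K, ∀ e ∈ Suc, s ++ [e] ∈ M → s ++ [e] ∈ K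

/-- The supremal controllable (prefix-closed) sublanguage of `M` w.r.t. `LG`. -/
def supC (M LG : Set (List E)) (Suc : Set E) : Set (List E) :=
  ⋃₀ {K | K ⊆ M ∧ PrefixClosed K ∧ ControllableLang K LG Suc}

/- Proof idea: an attacked event can only take `Sa` to its absorbing state `A`, and from
there `Sa ∥ Ga` follows `Ga`, which on ordinary events is `G` itself, from the state that
`G` reaches after `sσ`. -/

theorem runFrom_append (f : X → E → Option X) (x : X) (u v : List E) :
    runFrom f x (u ++ v) = (runFrom f x u).bind fun y => runFrom f y v := by
  induction u generalizing x with
  | nil => rfl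
  | cons e u ih => simp only [cons_append, runFrom, ih, Option.bind_assoc]

theorem runFrom_singleton (f : X → E → Option X) (x : X) (e : E) :
    runFrom f x [e] = f x e := by
  simp [runFrom]

theorem runFrom_prodStep {X1 X2 A : Type*} (f1 : X1 → A → Option X1)
    (f2 : X2 → A → Option X2) (x1 : X1) (x2 : X2) (w : List A) :
    runFrom (prodStep f1 f2) (x1, x2) w =
      (runFrom f1 x1 w).bind fun y1 => (runFrom f2 x2 w).map fun y2 => (y1, y2) := by
  induction w generalizing x1 x2 with
  | nil => rfl
  | cons a w ih =>
    simp only [runFrom, prodStep]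
    cases f1 x1 a <;> cases f2 x2 a <;> simp [ih]

theorem runFrom_prodStep_eq_some {X1 X2 A : Type*} {f1 : X1 → A → Option X1}
    {f2 : X2 → A → Option X2} {x1 y1 : X1} {x2 y2 : X2} {w : List A} :
    runFrom (prodStep f1 f2) (x1, x2) w = some (y1, y2) ↔
      runFrom f1 x1 w = some y1 ∧ runFrom f2 x2 w = some y2 := by
  rw [runFrom_prodStep]
  cases runFrom f1 x1 w <;> cases runFrom f2 x2 w <;> simp

section Attack

variable {f : X → E → Option X} {XS : Set X} {Scv : Set E}

theorem runFrom_saStep_none (w : List (E ⊕ E)) :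
    runFrom (saStep f XS Scv) none w = some none := by
  induction w with
  | nil => rfl
  | cons a w ih => cases a <;> exact ih

theorem saStep_inr_eq_some {p q : Option X} {σ : E}
    (h : saStep f XS Scv p (Sum.inr σ) = some q) : q = none := by
  cases p with
  | none => exact (Option.some.inj h).symm
  | some x =>
    simp only [saStep] at h
    split at h
    · exact (Option.some.inj h).symm
    · cases h

theorem runFrom_saStep_append_inr {p q : Option X} {w : List (E ⊕ E)} {σ : E}
    (h : runFrom (saStep f XS Scv) p (w ++ [Sum.inr σ]) = some q) : q = none := by
  rw [runFrom_append, Option.bind_eq_some_iff] at h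
  obtain ⟨r, -, hr⟩ := h
  exact saStep_inr_eq_some ((runFrom_singleton _ _ _).symm.trans hr)

theorem runFrom_gaStep_embed (x : X) (t : List E) :
    runFrom (gaStep f Scv) x (embed t) = runFrom f x t := by
  induction t generalizing x with
  | nil => rfl
  | cons e t ih => exact congrArg (Option.bind (f x e)) (funext ih)

theorem runFrom_gaStep_embed_append_inr {σ : E} (hσ : σ ∈ Scv) (x : X) (s : List E) :
    runFrom (gaStep f Scv) x (embed s ++ [Sum.inr σ]) = runFrom f x (s ++ [σ]) := by
  simp only [runFrom_append, runFrom_gaStep_embed, runFrom_singleton, gaStep, if_pos hσ]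

theorem runFrom_grStep_attack {x0 : X} {s : List E} {σ : E} {p : Option X × X}
    (hσ : σ ∈ Scv) (h : runFrom (grStep f XS Scv) (grInit x0) (embed s ++ [Sum.inr σ]) = some p) :
    p = (none, p.2) ∧ runFrom f x0 (s ++ [σ]) = some p.2 := by
  obtain ⟨hsa, hga⟩ := runFrom_prodStep_eq_some.mp h
  exact ⟨Prod.ext (runFrom_saStep_append_inr hsa) rfl,
    (runFrom_gaStep_embed_append_inr hσ x0 s).symm.trans hga⟩

theorem runFrom_grStep_none_embed (x : X) (t : List E) :
    runFrom (grStep f XS Scv) (none, x) (embed t) = (runFrom f x t).map (Prod.mk none) := by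
  rw [grStep, runFrom_prodStep, runFrom_saStep_none, runFrom_gaStep_embed, Option.bind_some]

end Attack

end RobustRec

theorem RobustRec.post_attack_full_plant_behavior_general
    {X E : Type*}
    (f : X → E → Option X) (x0 : X) (Scv : Set E) (XS : Set X) :
    ∀ (s : List E) (σ : E), σ ∈ Scv →
      embed s ++ [Sum.inr σ] ∈ GRLang f x0 XS Scv →
      {t : List E | embed s ++ [Sum.inr σ] ++ embed t ∈ GRLang f x0 XS Scv} =
        {t : List E | s ++ σ :: t ∈ Lang f x0} := by
  intro s σ hσ hattack
  obtain ⟨p, hp⟩ := Option.isSome_iff_exists.mp hattack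
  obtain ⟨hA, hplant⟩ := runFrom_grStep_attack hσ hp
  ext t
  have hcont : runFrom f x0 (s ++ σ :: t) = runFrom f p.2 t := by
    rw [← singleton_append, ← append_assoc, runFrom_append, hplant, Option.bind_some]
  simp only [GRLang, Lang, Set.mem_ofPred_eq, hcont, runFrom_append _ _ (embed s ++ _), hp,
    Option.bind_some]
  rw [hA, runFrom_grStep_none_embed, Option.isSome_map]

/-- After an attack, the attacked closed-loop system exhibits
the complete behavior of the plant: for every `sσᵃ ∈ L(Sa/Ga)` with `s ∈ Σ*`
and `σ ∈ Σ_{c,v}`, the continuations over `Σ` equal the post-language of the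
plant after `sσ`. -/
theorem RobustRec.post_attack_full_plant_behavior
    {X E : Type*} [Fintype X] [Fintype E]
    (f : X → E → Option X) (x0 : X) (Sc Suc Scv : Set E) (XUS XS : Set X)
    (hdisj : Sc ∩ Suc = ∅) (hcover : Sc ∪ Suc = Set.univ) (hScv : Scv ⊆ Sc)
    (hS : IsSupervisor f x0 Suc XUS XS) :
    ∀ (s : List E) (σ : E), σ ∈ Scv →
      embed s ++ [Sum.inr σ] ∈ GRLang f x0 XS Scv →
      {t : List E | embed s ++ [Sum.inr σ] ++ embed t ∈ GRLang f x0 XS Scv} =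
        {t : List E | s ++ σ :: t ∈ Lang f x0} :=
  RobustRec.post_attack_full_plant_behavior_general f x0 Scv XS
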